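/- arXiv:2604.15439 — 2 statements merged into one kernel-verified Lean document; each statement's English description precedes it below -/
import Mathlib

section
/- Let m_t ∈ ℝ^d and Σ_t ∈ ℝ^{d×d} be twice differentiable with Σ_t invertible for all t ∈ [0,1], and define v(t,x) = ṁ_t + (1/2)Σ̇_t Σ_t^{-1}(x - m_t). Then 2(∂_t v + (v·∇)v)(t,x) = 2m̈_t + (Σ̈_t - (1/2)Σ̇_t Σ_t^{-1} Σ̇_t) Σ_t^{-1}(x - m_t). In particular, if m̈_t ≡ 0 and Σ̈_t = (1/2)Σ̇_t Σ_t^{-1} Σ̇_t for all t, then the material derivative of v vanishes identically. -/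
open Matrix

/-- Entrywise derivative of a matrix-valued function of time. -/
noncomputable def matDeriv {d : ℕ} (f : ℝ → Matrix (Fin d) (Fin d) ℝ) (t : ℝ) :
    Matrix (Fin d) (Fin d) ℝ :=
  Matrix.of fun i j => deriv (fun s => f s i j) t

/-- The affine-in-space velocity field `v(t,x) = ṁ_t + (1/2) Σ̇_t Σ_t⁻¹ (x - m_t)`. -/
noncomputable def gaussVel {d : ℕ} (m : ℝ → Fin d → ℝ)
    (S : ℝ → Matrix (Fin d) (Fin d) ℝ) (t : ℝ) (x : Fin d → ℝ) : Fin d → ℝ :=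
  deriv m t + ((1/2 : ℝ) • (matDeriv S t * (S t)⁻¹)).mulVec (x - m t)

/-!
The field `v` is affine in `x` with gradient `B_t = ½ Σ̇_t Σ_t⁻¹`, so
`D_t v = m̈_t + (Ḃ_t + B_t²)(x - m_t)`: the two `B_t ṁ_t` terms cancel because the centre of the
field moves at exactly the offset velocity `ṁ_t`. Differentiating `Σ_t⁻¹` gives
`-Σ_t⁻¹ Σ̇_t Σ_t⁻¹`, and then `2(Ḃ_t + B_t²) = (Σ̈_t - ½ Σ̇_t Σ_t⁻¹ Σ̇_t) Σ_t⁻¹`.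
-/

section MatrixCalculus

variable {l m n : Type*}

theorem hasDerivAt_matrix_iff [Fintype l] [Fintype m] {f : ℝ → Matrix l m ℝ}
    {f' : Matrix l m ℝ} {t : ℝ} :
    HasDerivAt f f' t ↔ ∀ i j, HasDerivAt (fun s => f s i j) (f' i j) t :=
  hasDerivAt_pi.trans <| forall_congr' fun _ => hasDerivAt_pi

theorem HasDerivAt.matrix_const_smul [Fintype l] [Fintype m] {A : ℝ → Matrix l m ℝ}
    {A' : Matrix l m ℝ} {t : ℝ} (hA : HasDerivAt A A' t) (c : ℝ) :
    HasDerivAt (fun s => c • A s) (c • A') t := by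
  rw [hasDerivAt_matrix_iff] at hA ⊢
  exact fun i j => (hA i j).const_mul c

theorem HasDerivAt.matrix_mul [Fintype l] [Fintype m] [Fintype n] {A : ℝ → Matrix l m ℝ}
    {B : ℝ → Matrix m n ℝ} {A' : Matrix l m ℝ} {B' : Matrix m n ℝ} {t : ℝ}
    (hA : HasDerivAt A A' t) (hB : HasDerivAt B B' t) :
    HasDerivAt (fun s => A s * B s) (A' * B t + A t * B') t := by
  rw [hasDerivAt_matrix_iff] at hA hB ⊢
  intro i k
  simp only [mul_apply, Matrix.add_apply, ← Finset.sum_add_distrib]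
  exact HasDerivAt.fun_sum fun j _ => (hA i j).mul (hB j k)

theorem HasDerivAt.matrix_mulVec [Fintype m] [Fintype n] {B : ℝ → Matrix m n ℝ}
    {B' : Matrix m n ℝ} {w : ℝ → n → ℝ} {w' : n → ℝ} {t : ℝ}
    (hB : HasDerivAt B B' t) (hw : HasDerivAt w w' t) :
    HasDerivAt (fun s => B s *ᵥ w s) (B' *ᵥ w t + B t *ᵥ w') t := by
  rw [hasDerivAt_matrix_iff] at hB
  rw [hasDerivAt_pi] at hw ⊢
  intro i
  simp only [mulVec, dotProduct, Pi.add_apply, ← Finset.sum_add_distrib]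
  exact HasDerivAt.fun_sum fun j _ => (hB i j).mul (hw j)

theorem HasDerivAt.matrix_inv [Fintype n] [DecidableEq n] {S : ℝ → Matrix n n ℝ}
    {S' : Matrix n n ℝ} {t : ℝ}
    (hS : HasDerivAt S S' t) (ht : IsUnit (S t)) :
    HasDerivAt (fun s => (S s)⁻¹) (-((S t)⁻¹ * S' * (S t)⁻¹)) t := by
  -- `HasDerivAt` only sees the topology, so we may borrow a normed-algebra structure
  let _ : NormedRing (Matrix n n ℝ) := Matrix.linftyOpNormedRing
  let _ : NormedAlgebra ℝ (Matrix n n ℝ) := Matrix.linftyOpNormedAlgebra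
  obtain ⟨u, hu⟩ := ht
  have hinv : HasFDerivAt Ring.inverse _ (S t) := hu ▸ hasFDerivAt_ringInverse (𝕜 := ℝ) u
  have hcomp := hinv.comp_hasDerivAt t hS
  simp only [Function.comp_def, ← nonsing_inv_eq_ringInverse] at hcomp
  rw [← hu, ← coe_units_inv]
  exact hcomp

end MatrixCalculus

section MaterialDerivative

variable {n : Type*} [Fintype n]

noncomputable def materialDeriv {E : Type*} [NormedAddCommGroup E] [NormedSpace ℝ E]
    (v : ℝ → E → E) (t : ℝ) (x : E) : E :=
  deriv (fun s => v s x) t + fderiv ℝ (v t) x (v t x)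

theorem fderiv_add_mulVec_sub_apply (a c : n → ℝ) (B : Matrix n n ℝ) (x w : n → ℝ) :
    fderiv ℝ (fun y => a + B *ᵥ (y - c)) x w = B *ᵥ w := by
  have hB : HasFDerivAt (fun y => B *ᵥ y) (LinearMap.toContinuousLinearMap (mulVecLin B)) x :=
    (LinearMap.toContinuousLinearMap (mulVecLin B)).hasFDerivAt
  have h := (hB.sub_const (B *ᵥ c)).const_add a
  simp only [← mulVec_sub] at h
  rw [h.fderiv]
  rfl

theorem materialDeriv_add_mulVec_sub {a c : ℝ → n → ℝ} {B : ℝ → Matrix n n ℝ}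
    {a' c' : n → ℝ} {B' : Matrix n n ℝ} {t : ℝ}
    (ha : HasDerivAt a a' t) (hc : HasDerivAt c c' t) (hB : HasDerivAt B B' t) (x : n → ℝ) :
    materialDeriv (fun s y => a s + B s *ᵥ (y - c s)) t x
      = a' + B t *ᵥ (a t - c') + (B' + B t * B t) *ᵥ (x - c t) := by
  have hv : HasDerivAt (fun s => a s + B s *ᵥ (x - c s))
      (a' + (B' *ᵥ (x - c t) + B t *ᵥ -c')) t :=
    ha.add (hB.matrix_mulVec (hc.const_sub x))
  rw [materialDeriv, hv.deriv, fderiv_add_mulVec_sub_apply]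
  simp only [mulVec_add, mulVec_neg, add_mulVec, mulVec_mulVec, mulVec_sub]
  abel

end MaterialDerivative

theorem hasDerivAt_matDeriv {d : ℕ} {f : ℝ → Matrix (Fin d) (Fin d) ℝ} {t : ℝ}
    (hf : ∀ i j, DifferentiableAt ℝ (fun s => f s i j) t) : HasDerivAt f (matDeriv f t) t :=
  hasDerivAt_matrix_iff.mpr fun i j => (hf i j).hasDerivAt

theorem two_smul_materialDeriv_gaussVel {d : ℕ} {m : ℝ → Fin d → ℝ}
    {S : ℝ → Matrix (Fin d) (Fin d) ℝ} {t : ℝ} (hm : DifferentiableAt ℝ m t)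
    (hm' : DifferentiableAt ℝ (deriv m) t) (hS : ∀ i j, DifferentiableAt ℝ (fun s => S s i j) t)
    (hS' : ∀ i j, DifferentiableAt ℝ (fun s => matDeriv S s i j) t) (ht : IsUnit (S t))
    (x : Fin d → ℝ) :
    (2 : ℝ) • materialDeriv (gaussVel m S) t x
      = (2 : ℝ) • deriv (deriv m) t
        + ((matDeriv (matDeriv S) t - (1/2 : ℝ) • (matDeriv S t * (S t)⁻¹ * matDeriv S t))
            * (S t)⁻¹) *ᵥ (x - m t) := by
  set Si := (S t)⁻¹
  set Sd := matDeriv S t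
  set Sdd := matDeriv (matDeriv S) t
  have hB : HasDerivAt (fun s => (1/2 : ℝ) • (matDeriv S s * (S s)⁻¹))
      ((1/2 : ℝ) • (Sdd * Si + Sd * -(Si * Sd * Si))) t :=
    ((hasDerivAt_matDeriv hS').matrix_mul
      ((hasDerivAt_matDeriv hS).matrix_inv ht)).matrix_const_smul _
  have hRiccati : (2 : ℝ) • ((1/2 : ℝ) • (Sdd * Si + Sd * -(Si * Sd * Si))
        + (1/2 : ℝ) • (Sd * Si) * (1/2 : ℝ) • (Sd * Si))
      = (Sdd - (1/2 : ℝ) • (Sd * Si * Sd)) * Si := by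
    simp only [mul_neg, smul_mul_assoc, mul_smul_comm, smul_smul, sub_mul, mul_assoc]
    module
  unfold gaussVel
  rw [materialDeriv_add_mulVec_sub hm'.hasDerivAt hm.hasDerivAt hB x, sub_self,
    mulVec_zero, add_zero, smul_add, ← smul_mulVec, hRiccati]

/-- For twice differentiable `m_t`, `Σ_t` (invertible on `[0,1]`) and
`v(t,x) = ṁ_t + (1/2)Σ̇_t Σ_t⁻¹(x - m_t)`, the material derivative satisfies
`2(∂ₜ v + (v·∇)v) = 2m̈_t + (Σ̈_t - (1/2)Σ̇_t Σ_t⁻¹ Σ̇_t)Σ_t⁻¹(x-m_t)`; in particular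
it vanishes if `m̈ ≡ 0` and `Σ̈_t = (1/2)Σ̇_t Σ_t⁻¹ Σ̇_t`. -/
theorem material_derivative_multivariate_gaussian {d : ℕ}
    (m : ℝ → Fin d → ℝ) (S : ℝ → Matrix (Fin d) (Fin d) ℝ)
    (hm : ContDiff ℝ 2 m) (hS : ∀ i j, ContDiff ℝ 2 fun t => S t i j)
    (hinv : ∀ t ∈ Set.Icc (0:ℝ) 1, IsUnit (S t)) :
    (∀ t ∈ Set.Icc (0:ℝ) 1, ∀ x : Fin d → ℝ,
        (2:ℝ) • (deriv (fun s => gaussVel m S s x) t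
            + fderiv ℝ (gaussVel m S t) x (gaussVel m S t x))
          = (2:ℝ) • deriv (deriv m) t
            + ((matDeriv (matDeriv S) t
                - (1/2 : ℝ) • (matDeriv S t * (S t)⁻¹ * matDeriv S t))
                  * (S t)⁻¹).mulVec (x - m t))
    ∧ ((∀ t, deriv (deriv m) t = 0) →
        (∀ t ∈ Set.Icc (0:ℝ) 1,
          matDeriv (matDeriv S) t = (1/2 : ℝ) • (matDeriv S t * (S t)⁻¹ * matDeriv S t)) →
        ∀ t ∈ Set.Icc (0:ℝ) 1, ∀ x : Fin d → ℝ,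
          deriv (fun s => gaussVel m S s x) t
            + fderiv ℝ (gaussVel m S t) x (gaussVel m S t x) = 0) := by
  have h2 : (2 : WithTop ℕ∞) = 1 + 1 := by norm_num
  have hm' : Differentiable ℝ (deriv m) := ((h2 ▸ hm).deriv').differentiable one_ne_zero
  have hS' : ∀ i j, Differentiable ℝ (fun s => matDeriv S s i j) := fun i j =>
    ((h2 ▸ hS i j).deriv').differentiable one_ne_zero
  have key := fun t (ht : t ∈ Set.Icc (0:ℝ) 1) x =>
    two_smul_materialDeriv_gaussVel (hm.differentiable two_ne_zero t) (hm' t)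
      (fun i j => (hS i j).differentiable two_ne_zero t) (fun i j => hS' i j t) (hinv t ht) x
  refine ⟨key, fun hm0 hS0 t ht x => ?_⟩
  have hzero := key t ht x
  rw [hm0, hS0 t ht, sub_self, Matrix.zero_mul, zero_mulVec, smul_zero, add_zero] at hzero
  exact (smul_eq_zero.mp hzero).resolve_left two_ne_zero
end

section
/- Let X : [0,1] → ℝ be a stochastic process with continuous sample paths, and let a < b be reals such that ℙ(X_t ∈ (a,b)) ≤ ε for every t ∈ [0,1]. Suppose there are constants A, α, β > 0 such that ℙ(κ_X(δ) ≥ θ) ≤ A δ^α / θ^β for all θ, δ > 0, where κ_X(δ) = sup{|X_t - X_s| : |t-s| ≤ δ, t,s ∈ [0,1]} is the modulus of continuity. Then ℙ(N_X(a,b) ≥ 1) ≤ C(α) · A' · (ε^α / (b-a)^β)^{1/(α+1)} for a constant C(α) depending only on α (and the implicit constant A), where N_X(a,b) is the up-crossing number of the interval (a,b). -/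
/-!
On an up-crossing, let `v` be the first time the path reaches `b` and `w < v` the last time
before `v` at which it is below `a`; on `(w, v)` the path stays in `(a, b)`. If `v - w ≤ 1/n`,
then `κ_X(1/n) ≥ b - a`; otherwise one of the `n - 1` interior grid points `i/n` lies in `(w, v)`.
A union bound gives `ℙ(N_X(a,b) ≥ 1) ≤ A n^{-α}/(b-a)^β + (n - 1) ε`, and `n = ⌈T/ε⌉` with
`T = (ε^α/(b-a)^β)^{1/(α+1)}` bounds this by `(A + 1) T`; for `ε = 0` let `n → ∞`.
-/

open MeasureTheory Set

/-- Modulus of continuity of a path over `[0,1]` at scale `δ`. -/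
noncomputable def modCont (f : ℝ → ℝ) (δ : ℝ) : ℝ :=
  sSup {r | ∃ s ∈ Icc (0:ℝ) 1, ∃ t ∈ Icc (0:ℝ) 1, |t - s| ≤ δ ∧ r = |f t - f s|}

/-- The event that the path up-crosses the interval `(a,b)` at least once:
there are times `t < s` in `[0,1]` with `X_t ≤ a` and `X_s ≥ b`. -/
def upcrossEvent {Ω : Type*} (X : Ω → ℝ → ℝ) (a b : ℝ) : Set Ω :=
  {ω | ∃ t ∈ Icc (0:ℝ) 1, ∃ s ∈ Icc (0:ℝ) 1, t < s ∧ X ω t ≤ a ∧ b ≤ X ω s}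

open Filter Topology

lemma abs_sub_le_modCont {f : ℝ → ℝ} (hf : ContinuousOn f (Icc 0 1)) {s t δ : ℝ}
    (hs : s ∈ Icc (0:ℝ) 1) (ht : t ∈ Icc (0:ℝ) 1) (hst : |t - s| ≤ δ) :
    |f t - f s| ≤ modCont f δ := by
  obtain ⟨M, hM⟩ := isCompact_Icc.exists_bound_of_continuousOn hf
  refine le_csSup ⟨M + M, ?_⟩ ⟨s, hs, t, ht, hst, rfl⟩
  rintro r ⟨u, hu, v, hv, -, rfl⟩
  exact (abs_sub _ _).trans (add_le_add (hM v hv) (hM u hu))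

lemma ContinuousOn.exists_first_le_apply {f : ℝ → ℝ} {t s b : ℝ}
    (hf : ContinuousOn f (Icc t s)) (hts : t ≤ s) (hs : b ≤ f s) :
    ∃ v ∈ Icc t s, b ≤ f v ∧ ∀ u ∈ Ico t v, f u < b := by
  set S := Icc t s ∩ f ⁻¹' Ici b
  have hS : IsClosed S := hf.preimage_isClosed_of_isClosed isClosed_Icc isClosed_Ici
  have hbdd : BddBelow S := ⟨t, fun u hu => hu.1.1⟩
  obtain ⟨hv, hfv⟩ := hS.csInf_mem ⟨s, ⟨hts, le_rfl⟩, hs⟩ hbdd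
  refine ⟨sInf S, hv, hfv, fun u hu => not_le.1 fun hfu => ?_⟩
  exact hu.2.not_ge (csInf_le hbdd ⟨⟨hu.1, hu.2.le.trans hv.2⟩, hfu⟩)

lemma ContinuousOn.exists_last_apply_le {f : ℝ → ℝ} {t v a : ℝ}
    (hf : ContinuousOn f (Icc t v)) (htv : t ≤ v) (ht : f t ≤ a) :
    ∃ w ∈ Icc t v, f w ≤ a ∧ ∀ u ∈ Ioc w v, a < f u := by
  set S := Icc t v ∩ f ⁻¹' Iic a
  have hS : IsClosed S := hf.preimage_isClosed_of_isClosed isClosed_Icc isClosed_Iic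
  have hbdd : BddAbove S := ⟨v, fun u hu => hu.1.2⟩
  obtain ⟨hw, hfw⟩ := hS.csSup_mem ⟨t, ⟨le_rfl, htv⟩, ht⟩ hbdd
  refine ⟨sSup S, hw, hfw, fun u hu => not_le.1 fun hfu => ?_⟩
  exact hu.1.not_ge (le_csSup hbdd ⟨⟨hw.1.trans hu.1.le, hu.2⟩, hfu⟩)

lemma ContinuousOn.exists_mapsTo_Ioo {f : ℝ → ℝ} {t s a b : ℝ}
    (hf : ContinuousOn f (Icc t s)) (hab : a < b) (hts : t ≤ s) (ht : f t ≤ a) (hs : b ≤ f s) :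
    ∃ w v, t ≤ w ∧ w < v ∧ v ≤ s ∧ f w ≤ a ∧ b ≤ f v ∧ MapsTo f (Ioo w v) (Ioo a b) := by
  obtain ⟨v, hv, hfv, hbelow⟩ := hf.exists_first_le_apply hts hs
  obtain ⟨w, hw, hfw, habove⟩ :=
    (hf.mono (Icc_subset_Icc_right hv.2)).exists_last_apply_le hv.1 ht
  have hwv : w < v := hw.2.lt_of_ne fun h => by rw [h] at hfw; linarith
  exact ⟨w, v, hw.1, hwv, hv.2, hfw, hfv,
    fun u hu => ⟨habove u ⟨hu.1, hu.2.le⟩, hbelow u ⟨hw.1.trans hu.1.le, hu.2⟩⟩⟩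

lemma exists_nat_div_mem_Ioo {w v : ℝ} {n : ℕ} (hn : 0 < n) (hw : 0 ≤ w) (hv : v ≤ 1)
    (hwv : 1 / n < v - w) : ∃ i ∈ Finset.Ioo 0 n, (i / n : ℝ) ∈ Ioo w v := by
  have hn' : (0 : ℝ) < n := Nat.cast_pos.2 hn
  have hlt : w < (⌊w * n⌋₊ + 1 : ℕ) / n := by
    rw [lt_div_iff₀ hn']
    exact_mod_cast Nat.lt_floor_add_one (w * n)
  have hgt : ((⌊w * n⌋₊ + 1 : ℕ) : ℝ) / n < v := by
    have := Nat.floor_le (mul_nonneg hw hn'.le)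
    calc ((⌊w * n⌋₊ + 1 : ℕ) : ℝ) / n ≤ (w * n + 1) / n := by gcongr; push_cast; linarith
      _ = w + 1 / n := by field_simp
      _ < v := by linarith
  have hin : ⌊w * n⌋₊ + 1 < n := by
    have := (div_lt_one hn').1 (hgt.trans_le hv)
    exact_mod_cast this
  exact ⟨_, Finset.mem_Ioo.2 ⟨Nat.succ_pos _, hin⟩, hlt, hgt⟩

lemma le_modCont_or_exists_mem_Ioo {f : ℝ → ℝ} (hf : ContinuousOn f (Icc 0 1)) {a b : ℝ}
    (hab : a < b) {t s : ℝ} (ht : t ∈ Icc (0:ℝ) 1) (hs : s ∈ Icc (0:ℝ) 1) (hts : t ≤ s)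
    (hft : f t ≤ a) (hfs : b ≤ f s) {n : ℕ} (hn : 0 < n) :
    b - a ≤ modCont f (1 / n) ∨ ∃ i ∈ Finset.Ioo 0 n, f (i / n) ∈ Ioo a b := by
  obtain ⟨w, v, htw, hwv, hvs, hfw, hfv, hmaps⟩ :=
    (hf.mono (Icc_subset_Icc ht.1 hs.2)).exists_mapsTo_Ioo hab hts hft hfs
  have hw : w ∈ Icc (0:ℝ) 1 := ⟨ht.1.trans htw, by linarith [hs.2]⟩
  have hv : v ∈ Icc (0:ℝ) 1 := ⟨by linarith [ht.1], hvs.trans hs.2⟩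
  rcases le_or_gt (v - w) (1 / n) with hclose | hfar
  · left
    calc b - a ≤ |f v - f w| := (sub_le_sub hfv hfw).trans (le_abs_self _)
      _ ≤ modCont f (1 / n) :=
        abs_sub_le_modCont hf hw hv (by rwa [abs_of_pos (sub_pos.2 hwv)])
  · obtain ⟨i, hi, hmem⟩ := exists_nat_div_mem_Ioo hn hw.1 hv.2 hfar
    exact Or.inr ⟨i, hi, hmaps hmem⟩

lemma measure_upcrossEvent_le {Ω : Type*} [MeasurableSpace Ω] (μ : Measure Ω)
    {X : Ω → ℝ → ℝ} (hX : ∀ ω, ContinuousOn (X ω) (Icc 0 1)) {a b : ℝ} (hab : a < b)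
    {n : ℕ} (hn : 0 < n) :
    μ (upcrossEvent X a b) ≤ μ {ω | b - a ≤ modCont (X ω) (1 / n)} +
      ∑ i ∈ Finset.Ioo 0 n, μ {ω | X ω (i / n) ∈ Ioo a b} := by
  calc μ (upcrossEvent X a b)
      ≤ μ ({ω | b - a ≤ modCont (X ω) (1 / n)} ∪
          ⋃ i ∈ Finset.Ioo 0 n, {ω | X ω (i / n) ∈ Ioo a b}) := by
        refine measure_mono fun ω ⟨t, ht, s, hs, hts, hft, hfs⟩ => ?_
        rcases le_modCont_or_exists_mem_Ioo (hX ω) hab ht hs hts.le hft hfs hn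
          with h | ⟨i, hi, h⟩
        · exact Or.inl h
        · exact Or.inr (mem_biUnion hi h)
    _ ≤ _ := (measure_union_le _ _).trans (add_le_add_right (measure_biUnion_finset_le _ _) _)

lemma measure_upcrossEvent_le_ofReal {Ω : Type*} [MeasurableSpace Ω] (μ : Measure Ω)
    {X : Ω → ℝ → ℝ} (hX : ∀ ω, ContinuousOn (X ω) (Icc 0 1)) {a b ε p : ℝ} (hab : a < b)
    (hε : 0 ≤ ε) (hp : 0 ≤ p)
    (hmem : ∀ t ∈ Icc (0:ℝ) 1, μ {ω | X ω t ∈ Ioo a b} ≤ ENNReal.ofReal ε)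
    {n : ℕ} (hn : 0 < n) (hκ : μ {ω | b - a ≤ modCont (X ω) (1 / n)} ≤ ENNReal.ofReal p) :
    μ (upcrossEvent X a b) ≤ ENNReal.ofReal (p + (n - 1) * ε) := by
  have hgrid : ∀ i ∈ Finset.Ioo 0 n, (i / n : ℝ) ∈ Icc (0:ℝ) 1 := fun i hi =>
    ⟨by positivity,
      (div_le_one (Nat.cast_pos.2 hn)).2 (by exact_mod_cast (Finset.mem_Ioo.1 hi).2.le)⟩
  calc μ (upcrossEvent X a b)
      ≤ ENNReal.ofReal p + ∑ i ∈ Finset.Ioo 0 n, ENNReal.ofReal ε :=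
        (measure_upcrossEvent_le μ hX hab hn).trans
          (add_le_add hκ (Finset.sum_le_sum fun i hi => hmem _ (hgrid i hi)))
    _ = ENNReal.ofReal (p + (n - 1) * ε) := by
        rw [Finset.sum_const, Nat.card_Ioo, nsmul_eq_mul, ← ENNReal.ofReal_natCast,
          ← ENNReal.ofReal_mul (by positivity), ← ENNReal.ofReal_add hp (by positivity),
          Nat.sub_zero, Nat.cast_pred hn]

lemma exists_nat_add_le_rpow {α A D e : ℝ} (hα : 0 < α) (hA : 0 ≤ A) (hD : 0 < D) (he : 0 < e) :
    ∃ n : ℕ, 0 < n ∧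
      A * (1 / n) ^ α / D + (n - 1) * e ≤ (A + 1) * (e ^ α / D) ^ (1 / (α + 1)) := by
  set T := (e ^ α / D) ^ (1 / (α + 1))
  have hT : 0 < T := by positivity
  have hTpow : T ^ α * T * D = e ^ α := by
    rw [← Real.rpow_add_one hT.ne', ← Real.rpow_mul (by positivity),
      one_div_mul_cancel (by linarith), Real.rpow_one, div_mul_cancel₀ _ hD.ne']
  have hr : 0 < T / e := by positivity
  refine ⟨⌈T / e⌉₊, Nat.ceil_pos.2 hr, ?_⟩
  have hmod : A * (1 / ⌈T / e⌉₊) ^ α / D ≤ A * T :=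
    calc A * (1 / ⌈T / e⌉₊) ^ α / D ≤ A * (1 / (T / e)) ^ α / D := by
          gcongr; exact Nat.le_ceil _
      _ = A * T := by
          rw [one_div_div, Real.div_rpow he.le hT.le, ← hTpow]
          field_simp
  have hpoints : (⌈T / e⌉₊ - 1) * e ≤ T :=
    calc (⌈T / e⌉₊ - 1) * e ≤ T / e * e := by
          gcongr; linarith [Nat.ceil_lt_add_one hr.le]
      _ = T := div_mul_cancel₀ _ he.ne'
  linarith

/-- If a continuous-path process satisfies `ℙ(X_t ∈ (a,b)) ≤ ε` for
all `t ∈ [0,1]` and the modulus-of-continuity concentration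
`ℙ(κ_X(δ) ≥ θ) ≤ A δ^α/θ^β`, then the probability of an up-crossing of `(a,b)` is at
most `C·A·(ε^α/(b-a)^β)^{1/(α+1)}` for a constant `C` depending only on `α` (and `A`). -/
theorem upcrossing_probability_bound (α A : ℝ) (hα : 0 < α) (hA : 0 < A) :
    ∃ C : ℝ, 0 < C ∧
      ∀ (β : ℝ), 0 < β →
      ∀ (Ω : Type) [MeasurableSpace Ω] (μ : Measure Ω), IsProbabilityMeasure μ →
      ∀ (X : Ω → ℝ → ℝ), (∀ ω, ContinuousOn (X ω) (Icc 0 1)) →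
      ∀ (a b ε : ℝ), a < b → 0 ≤ ε →
      (∀ t ∈ Icc (0:ℝ) 1, μ {ω | X ω t ∈ Ioo a b} ≤ ENNReal.ofReal ε) →
      (∀ θ δ : ℝ, 0 < θ → 0 < δ →
        μ {ω | θ ≤ modCont (X ω) δ} ≤ ENNReal.ofReal (A * δ ^ α / θ ^ β)) →
      μ (upcrossEvent X a b)
        ≤ ENNReal.ofReal (C * A * (ε ^ α / (b - a) ^ β) ^ ((1:ℝ)/(α+1))) := by
  refine ⟨(A + 1) / A, by positivity, ?_⟩
  intro β _ Ω _ μ _ X hX a b ε hab hε hmem hκ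
  rw [div_mul_cancel₀ _ hA.ne']
  have hD : 0 < (b - a) ^ β := Real.rpow_pos_of_pos (sub_pos.2 hab) β
  have key : ∀ n : ℕ, 0 < n → μ (upcrossEvent X a b) ≤
      ENNReal.ofReal (A * (1 / n) ^ α / (b - a) ^ β + (n - 1) * ε) := fun n hn =>
    measure_upcrossEvent_le_ofReal μ hX hab hε (by positivity) hmem hn
      (hκ _ _ (sub_pos.2 hab) (by positivity))
  rcases hε.eq_or_lt with rfl | hε
  · have hlim : Tendsto (fun n : ℕ => A * (1 / n) ^ α / (b - a) ^ β + (n - 1) * 0)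
        atTop (𝓝 0) := by
      have hpow := tendsto_one_div_atTop_nhds_zero_nat.rpow_const (p := α) (Or.inr hα.le)
      simpa [Real.zero_rpow hα.ne'] using (hpow.const_mul A).div_const ((b - a) ^ β)
    have hzero := ge_of_tendsto (ENNReal.tendsto_ofReal hlim)
      (eventually_atTop.2 ⟨1, fun n hn => key n hn⟩)
    exact (hzero.trans_eq ENNReal.ofReal_zero).trans zero_le
  · obtain ⟨n, hn, hle⟩ := exists_nat_add_le_rpow hα hA.le hD hε
    exact (key n hn).trans (ENNReal.ofReal_le_ofReal hle)
end
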